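/- Let 2/3 < ν < 4/5 and let ν₋, ν₊ satisfy: ν₋, ν₊ > 0; 3ν/2 − 1 < ν₋ < ν/2; 0 < ν₊ < 1 − ν; ν₋ + ν₊ = 1 − ν. With g_a(ζ) := sinh((ζ − iπa)/2) / sinh((ζ + iπa)/2) and S_CDD(ζ) := g_{ν−ν₋}(ζ) · g_{ν+ν₊}(ζ) · g_{1−ν+ν₋}(ζ) · g_{1−ν−ν₊}(ζ), the function S_CDD^{21}(ζ) := S_CDD(ζ + iπν/2) · S_CDD(ζ − iπν/2) extends to a holomorphic function on the whole physical strip {ζ ∈ ℂ : 0 < Im ζ < π}: every pole of one factor inside the strip is cancelled by a zero of the other factor (the cancellation uses ν₋ + ν₊ = 1 − ν). -/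
import Mathlib


open Complex

/-- The elementary factor g_a(ζ) = sinh((ζ − iπa)/2)/sinh((ζ + iπa)/2). -/
noncomputable def gfac (a : ℝ) (ζ : ℂ) : ℂ :=
  Complex.sinh ((ζ - Complex.I * (Real.pi : ℂ) * (a : ℂ)) / 2) /
  Complex.sinh ((ζ + Complex.I * (Real.pi : ℂ) * (a : ℂ)) / 2)

/-- The CDD factor S_CDD = g_{ν−ν₋} g_{ν+ν₊} g_{1−ν+ν₋} g_{1−ν−ν₊}. -/
noncomputable def SCDD (ν νm νp : ℝ) (ζ : ℂ) : ℂ :=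
  gfac (ν - νm) ζ * gfac (ν + νp) ζ * gfac (1 - ν + νm) ζ * gfac (1 - ν - νp) ζ

/-- The CDD factor for the (b₂b₁) channel:
S_CDD²¹(ζ) = S_CDD(ζ + iπν/2)·S_CDD(ζ − iπν/2). -/
noncomputable def SCDD21 (ν νm νp : ℝ) (ζ : ℂ) : ℂ :=
  SCDD ν νm νp (ζ + Complex.I * (Real.pi : ℂ) * (ν : ℂ) / 2) *
  SCDD ν νm νp (ζ - Complex.I * (Real.pi : ℂ) * (ν : ℂ) / 2)

set_option maxHeartbeats 1000000

lemma sinh_ne_zero_strip (b : ℝ) (hb0 : 0 < b) (hb1 : b < 1) (ζ : ℂ)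
    (h0 : 0 < ζ.im) (hπ : ζ.im < Real.pi) :
    Complex.sinh ((ζ + Complex.I * (Real.pi : ℂ) * (b : ℂ)) / 2) ≠ 0 := by
  intro h
  have h' : Complex.sin (((ζ + Complex.I * (Real.pi : ℂ) * (b : ℂ)) / 2) * Complex.I) = 0 := by
    rw [Complex.sin_mul_I, h, zero_mul]
  rw [Complex.sin_eq_zero_iff] at h'
  obtain ⟨k, hk⟩ := h'
  have hz : ζ = ((-(2*(k:ℝ)+b)*Real.pi : ℝ) : ℂ) * Complex.I := by
    push_cast at hk ⊢
    linear_combination (-2*Complex.I) * hk + (ζ + Complex.I*(Real.pi:ℂ)*(b:ℂ)) * Complex.I_sq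
  have him : ζ.im = -(2*(k:ℝ)+b)*Real.pi := by rw [hz]; simp
  have hpi := Real.pi_pos
  have hk0 : (0:ℝ) < -(2*(k:ℝ)+b) := by nlinarith [him ▸ h0]
  have hk1 : -(2*(k:ℝ)+b) < 1 := by nlinarith [him ▸ hπ]
  have e1 : (0:ℤ) < -2*k := by exact_mod_cast (show (0:ℝ) < (-2*k:ℤ) by push_cast; linarith)
  have e2 : (-2*k : ℤ) < 2 := by exact_mod_cast (show ((-2*k:ℤ):ℝ) < 2 by push_cast; linarith)
  omega

lemma sinh_sub_pi_I (w : ℂ) : Complex.sinh (w - (Real.pi : ℂ) * Complex.I) = -Complex.sinh w := by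
  rw [Complex.sinh_sub, Complex.sinh_mul_I, Complex.cosh_mul_I,
    ← Complex.ofReal_sin, ← Complex.ofReal_cos, Real.sin_pi, Real.cos_pi]
  push_cast; ring


/-- under the stated conditions on ν, ν₋, ν₊, the function S_CDD²¹
extends to a holomorphic function on the whole physical strip 0 < Im ζ < π,
agreeing with S_CDD²¹ at every point of the strip where no denominator of either
factor vanishes. -/
theorem SCDD21_extends_holomorphically (ν : ℝ) (h1 : 2/3 < ν) (h2 : ν < 4/5)
    (νm νp : ℝ) (hm : 0 < νm) (hp : 0 < νp)
    (hm1 : 3*ν/2 - 1 < νm) (hm2 : νm < ν/2)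
    (hp1 : νp < 1 - ν) (hsum : νm + νp = 1 - ν) :
    ∃ F : ℂ → ℂ,
      (∀ ζ : ℂ, 0 < ζ.im → ζ.im < Real.pi → AnalyticAt ℂ F ζ) ∧
      (∀ ζ : ℂ, 0 < ζ.im → ζ.im < Real.pi →
        (∀ a ∈ ({ν - νm, ν + νp, 1 - ν + νm, 1 - ν - νp} : Set ℝ),
          Complex.sinh ((ζ + Complex.I * (Real.pi : ℂ) * (ν : ℂ) / 2
            + Complex.I * (Real.pi : ℂ) * (a : ℂ)) / 2) ≠ 0 ∧
          Complex.sinh ((ζ - Complex.I * (Real.pi : ℂ) * (ν : ℂ) / 2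
            + Complex.I * (Real.pi : ℂ) * (a : ℂ)) / 2) ≠ 0) →
        F ζ = SCDD21 ν νm νp ζ) := by
  have hsumC : (νm : ℂ) + (νp : ℂ) = 1 - (ν : ℂ) := by exact_mod_cast congrArg (Complex.ofReal) hsum
  refine ⟨fun z =>
    -(Complex.sinh ((z - Complex.I * (Real.pi : ℂ) * (ν : ℂ) / 2
        - Complex.I * (Real.pi : ℂ) * ((1 - ν - νp : ℝ) : ℂ)) / 2) *
      Complex.sinh ((z + Complex.I * (Real.pi : ℂ) * (ν : ℂ) / 2
        - Complex.I * (Real.pi : ℂ) * ((ν + νp : ℝ) : ℂ)) / 2)) /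
    (Complex.sinh ((z + Complex.I * (Real.pi : ℂ) * (ν : ℂ) / 2
        + Complex.I * (Real.pi : ℂ) * ((ν - νm : ℝ) : ℂ)) / 2) *
      Complex.sinh ((z - Complex.I * (Real.pi : ℂ) * (ν : ℂ) / 2
        + Complex.I * (Real.pi : ℂ) * ((1 - ν + νm : ℝ) : ℂ)) / 2)) *
    (gfac (1 - ν + νm) (z + Complex.I * (Real.pi : ℂ) * (ν : ℂ) / 2) *
     gfac (1 - ν - νp) (z + Complex.I * (Real.pi : ℂ) * (ν : ℂ) / 2) *
     gfac (ν - νm) (z - Complex.I * (Real.pi : ℂ) * (ν : ℂ) / 2) *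
     gfac (ν + νp) (z - Complex.I * (Real.pi : ℂ) * (ν : ℂ) / 2)), ?_, ?_⟩
  · -- analyticity
    intro ζ h0 hπ
    have hne : ∀ (w : ℂ) (b : ℝ), 0 < b → b < 1 →
        w = (ζ + Complex.I * (Real.pi : ℂ) * (b : ℂ)) / 2 → Complex.sinh w ≠ 0 := by
      rintro w b hb0 hb1 rfl
      exact sinh_ne_zero_strip b hb0 hb1 ζ h0 hπ
    have hA : ∀ f : ℂ → ℂ, Differentiable ℂ f →
        AnalyticAt ℂ (fun z => Complex.sinh (f z)) ζ :=
      fun f hf => ((Complex.differentiable_sinh.comp hf).analyticAt ζ)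
    have hd1 : Complex.sinh ((ζ + Complex.I * (Real.pi : ℂ) * (ν : ℂ) / 2
        + Complex.I * (Real.pi : ℂ) * ((ν - νm : ℝ) : ℂ)) / 2) ≠ 0 :=
      hne _ (3*ν/2 - νm) (by linarith) (by linarith) (by push_cast; ring)
    have hd2 : Complex.sinh ((ζ - Complex.I * (Real.pi : ℂ) * (ν : ℂ) / 2
        + Complex.I * (Real.pi : ℂ) * ((1 - ν + νm : ℝ) : ℂ)) / 2) ≠ 0 :=
      hne _ (1 - 3*ν/2 + νm) (by linarith) (by linarith) (by push_cast; ring)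
    have hd3 : Complex.sinh ((ζ + Complex.I * (Real.pi : ℂ) * (ν : ℂ) / 2
        + Complex.I * (Real.pi : ℂ) * ((1 - ν + νm : ℝ) : ℂ)) / 2) ≠ 0 :=
      hne _ (1 - ν/2 + νm) (by linarith) (by linarith) (by push_cast; ring)
    have hd4 : Complex.sinh ((ζ + Complex.I * (Real.pi : ℂ) * (ν : ℂ) / 2
        + Complex.I * (Real.pi : ℂ) * ((1 - ν - νp : ℝ) : ℂ)) / 2) ≠ 0 :=
      hne _ (1 - ν/2 - νp) (by linarith) (by linarith) (by push_cast; ring)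
    have hd5 : Complex.sinh ((ζ - Complex.I * (Real.pi : ℂ) * (ν : ℂ) / 2
        + Complex.I * (Real.pi : ℂ) * ((ν - νm : ℝ) : ℂ)) / 2) ≠ 0 :=
      hne _ (ν/2 - νm) (by linarith) (by linarith) (by push_cast; ring)
    have hd6 : Complex.sinh ((ζ - Complex.I * (Real.pi : ℂ) * (ν : ℂ) / 2
        + Complex.I * (Real.pi : ℂ) * ((ν + νp : ℝ) : ℂ)) / 2) ≠ 0 :=
      hne _ (ν/2 + νp) (by linarith) (by linarith) (by push_cast; ring)
    have hf1 : AnalyticAt ℂ (fun z : ℂ => Complex.sinh ((z - Complex.I * (Real.pi : ℂ) * (ν : ℂ) / 2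
        - Complex.I * (Real.pi : ℂ) * ((1 - ν - νp : ℝ) : ℂ)) / 2)) ζ := hA _ (by fun_prop)
    have hf2 : AnalyticAt ℂ (fun z : ℂ => Complex.sinh ((z + Complex.I * (Real.pi : ℂ) * (ν : ℂ) / 2
        - Complex.I * (Real.pi : ℂ) * ((ν + νp : ℝ) : ℂ)) / 2)) ζ := hA _ (by fun_prop)
    have hf3 : AnalyticAt ℂ (fun z : ℂ => Complex.sinh ((z + Complex.I * (Real.pi : ℂ) * (ν : ℂ) / 2
        + Complex.I * (Real.pi : ℂ) * ((ν - νm : ℝ) : ℂ)) / 2)) ζ := hA _ (by fun_prop)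
    have hf4 : AnalyticAt ℂ (fun z : ℂ => Complex.sinh ((z - Complex.I * (Real.pi : ℂ) * (ν : ℂ) / 2
        + Complex.I * (Real.pi : ℂ) * ((1 - ν + νm : ℝ) : ℂ)) / 2)) ζ := hA _ (by fun_prop)
    have hn3 : AnalyticAt ℂ (fun z : ℂ => Complex.sinh ((z + Complex.I * (Real.pi : ℂ) * (ν : ℂ) / 2
        - Complex.I * (Real.pi : ℂ) * ((1 - ν + νm : ℝ) : ℂ)) / 2)) ζ := hA _ (by fun_prop)
    have hg3 : AnalyticAt ℂ (fun z : ℂ => Complex.sinh ((z + Complex.I * (Real.pi : ℂ) * (ν : ℂ) / 2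
        + Complex.I * (Real.pi : ℂ) * ((1 - ν + νm : ℝ) : ℂ)) / 2)) ζ := hA _ (by fun_prop)
    have hn4 : AnalyticAt ℂ (fun z : ℂ => Complex.sinh ((z + Complex.I * (Real.pi : ℂ) * (ν : ℂ) / 2
        - Complex.I * (Real.pi : ℂ) * ((1 - ν - νp : ℝ) : ℂ)) / 2)) ζ := hA _ (by fun_prop)
    have hg4 : AnalyticAt ℂ (fun z : ℂ => Complex.sinh ((z + Complex.I * (Real.pi : ℂ) * (ν : ℂ) / 2
        + Complex.I * (Real.pi : ℂ) * ((1 - ν - νp : ℝ) : ℂ)) / 2)) ζ := hA _ (by fun_prop)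
    have hn5 : AnalyticAt ℂ (fun z : ℂ => Complex.sinh ((z - Complex.I * (Real.pi : ℂ) * (ν : ℂ) / 2
        - Complex.I * (Real.pi : ℂ) * ((ν - νm : ℝ) : ℂ)) / 2)) ζ := hA _ (by fun_prop)
    have hg5 : AnalyticAt ℂ (fun z : ℂ => Complex.sinh ((z - Complex.I * (Real.pi : ℂ) * (ν : ℂ) / 2
        + Complex.I * (Real.pi : ℂ) * ((ν - νm : ℝ) : ℂ)) / 2)) ζ := hA _ (by fun_prop)
    have hn6 : AnalyticAt ℂ (fun z : ℂ => Complex.sinh ((z - Complex.I * (Real.pi : ℂ) * (ν : ℂ) / 2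
        - Complex.I * (Real.pi : ℂ) * ((ν + νp : ℝ) : ℂ)) / 2)) ζ := hA _ (by fun_prop)
    have hg6 : AnalyticAt ℂ (fun z : ℂ => Complex.sinh ((z - Complex.I * (Real.pi : ℂ) * (ν : ℂ) / 2
        + Complex.I * (Real.pi : ℂ) * ((ν + νp : ℝ) : ℂ)) / 2)) ζ := hA _ (by fun_prop)
    simp only [gfac]
    exact ((hf1.mul hf2).neg.div (hf3.mul hf4) (mul_ne_zero hd1 hd2)).mul
      ((((hn3.div hg3 hd3).mul (hn4.div hg4 hd4)).mul (hn5.div hg5 hd5)).mul (hn6.div hg6 hd6))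
  · -- equality
    intro ζ h0 hπ h
    obtain ⟨hD1, hD5⟩ := h (ν - νm) (by left; rfl)
    obtain ⟨hD2, hD6⟩ := h (ν + νp) (by right; left; rfl)
    obtain ⟨hD3, hD7⟩ := h (1 - ν + νm) (by right; right; left; rfl)
    obtain ⟨hD4, hD8⟩ := h (1 - ν - νp) (by right; right; right; rfl)
    have e1 : Complex.sinh ((ζ + Complex.I * (Real.pi : ℂ) * (ν : ℂ) / 2
          - Complex.I * (Real.pi : ℂ) * ((ν - νm : ℝ) : ℂ)) / 2)
        = Complex.sinh ((ζ - Complex.I * (Real.pi : ℂ) * (ν : ℂ) / 2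
          + Complex.I * (Real.pi : ℂ) * ((1 - ν - νp : ℝ) : ℂ)) / 2) := by
      congr 1
      push_cast
      linear_combination (Complex.I * (Real.pi : ℂ) / 2) * hsumC
    have e2 : Complex.sinh ((ζ - Complex.I * (Real.pi : ℂ) * (ν : ℂ) / 2
          - Complex.I * (Real.pi : ℂ) * ((1 - ν + νm : ℝ) : ℂ)) / 2)
        = -Complex.sinh ((ζ + Complex.I * (Real.pi : ℂ) * (ν : ℂ) / 2
          + Complex.I * (Real.pi : ℂ) * ((ν + νp : ℝ) : ℂ)) / 2) := by
      have harg : (ζ - Complex.I * (Real.pi : ℂ) * (ν : ℂ) / 2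
          - Complex.I * (Real.pi : ℂ) * ((1 - ν + νm : ℝ) : ℂ)) / 2
          = (ζ + Complex.I * (Real.pi : ℂ) * (ν : ℂ) / 2
          + Complex.I * (Real.pi : ℂ) * ((ν + νp : ℝ) : ℂ)) / 2 - (Real.pi : ℂ) * Complex.I := by
        push_cast
        linear_combination (-(Complex.I) * (Real.pi : ℂ) / 2) * hsumC
      rw [harg, sinh_sub_pi_I]
    have cancel1 : ∀ (n x d : ℂ), x ≠ 0 → d ≠ 0 → x / d * (n / x) = n / d := by
      intro n x d hx hd; field_simp
    have cancel2 : ∀ (n x d : ℂ), x ≠ 0 → d ≠ 0 → n / x * (-x / d) = -(n / d) := by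
      intro n x d hx hd; field_simp
    have hA_eq : gfac (ν - νm) (ζ + Complex.I * (Real.pi : ℂ) * (ν : ℂ) / 2) *
        gfac (1 - ν - νp) (ζ - Complex.I * (Real.pi : ℂ) * (ν : ℂ) / 2)
        = Complex.sinh ((ζ - Complex.I * (Real.pi : ℂ) * (ν : ℂ) / 2
            - Complex.I * (Real.pi : ℂ) * ((1 - ν - νp : ℝ) : ℂ)) / 2) /
          Complex.sinh ((ζ + Complex.I * (Real.pi : ℂ) * (ν : ℂ) / 2
            + Complex.I * (Real.pi : ℂ) * ((ν - νm : ℝ) : ℂ)) / 2) := by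
      simp only [gfac]
      rw [e1]
      exact cancel1 _ _ _ hD8 hD1
    have hB_eq : gfac (ν + νp) (ζ + Complex.I * (Real.pi : ℂ) * (ν : ℂ) / 2) *
        gfac (1 - ν + νm) (ζ - Complex.I * (Real.pi : ℂ) * (ν : ℂ) / 2)
        = -(Complex.sinh ((ζ + Complex.I * (Real.pi : ℂ) * (ν : ℂ) / 2
            - Complex.I * (Real.pi : ℂ) * ((ν + νp : ℝ) : ℂ)) / 2) /
          Complex.sinh ((ζ - Complex.I * (Real.pi : ℂ) * (ν : ℂ) / 2
            + Complex.I * (Real.pi : ℂ) * ((1 - ν + νm : ℝ) : ℂ)) / 2)) := by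
      simp only [gfac]
      rw [e2]
      exact cancel2 _ _ _ hD2 hD7
    simp only [SCDD21, SCDD]
    refine Eq.trans (b :=
      (Complex.sinh ((ζ - Complex.I * (Real.pi : ℂ) * (ν : ℂ) / 2
          - Complex.I * (Real.pi : ℂ) * ((1 - ν - νp : ℝ) : ℂ)) / 2) /
        Complex.sinh ((ζ + Complex.I * (Real.pi : ℂ) * (ν : ℂ) / 2
          + Complex.I * (Real.pi : ℂ) * ((ν - νm : ℝ) : ℂ)) / 2)) *
      (-(Complex.sinh ((ζ + Complex.I * (Real.pi : ℂ) * (ν : ℂ) / 2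
          - Complex.I * (Real.pi : ℂ) * ((ν + νp : ℝ) : ℂ)) / 2) /
        Complex.sinh ((ζ - Complex.I * (Real.pi : ℂ) * (ν : ℂ) / 2
          + Complex.I * (Real.pi : ℂ) * ((1 - ν + νm : ℝ) : ℂ)) / 2))) *
      (gfac (1 - ν + νm) (ζ + Complex.I * (Real.pi : ℂ) * (ν : ℂ) / 2) *
       gfac (1 - ν - νp) (ζ + Complex.I * (Real.pi : ℂ) * (ν : ℂ) / 2) *
       gfac (ν - νm) (ζ - Complex.I * (Real.pi : ℂ) * (ν : ℂ) / 2) *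
       gfac (ν + νp) (ζ - Complex.I * (Real.pi : ℂ) * (ν : ℂ) / 2))) (by ring) ?_
    rw [← hA_eq, ← hB_eq]
    ring
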